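/- arXiv:1203.1188 — 3 statements merged into one kernel-verified Lean document; each statement's English description precedes it below -/
import Mathlib

section
/- For every β ∈ (0,2) there exists a finite constant c = c(β) such that for every s > 0 and every w ∈ ℝ³, ∫_{ℝ³}∫_{ℝ³} |w + v − u|^{−β} G(s,du) G(s,dv) ≤ c · s^{2−β}. In particular, for every T > 0, the supremum over s ∈ (0,T] and w ∈ ℝ³ of ∫_{ℝ³}∫_{ℝ³} |w + v − u|^{−β} G(s,du) G(s,dv) is finite. -/
/-!
The measure `σ_s = μH[2]` restricted to the sphere of radius `s` is upper Ahlfors regular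
uniformly in `s`: `σ_s (closedBall z r) ≤ K r²`. Near its centre, a small cap of the unit sphere is
a Lipschitz graph over a planar disc (after a reflection moving the centre to the north pole); a
ball around an arbitrary point meets the sphere inside a cap of twice the radius around a nearest
point; the whole unit sphere has finite measure by compactness; and the homogeneity of `μH[2]`
transfers everything to radius `s`. Splitting the sphere into dyadic shells around `z` turns
the ball bound into `∫ |z - v|^{-β} dσ_s(v) ≤ C K s^{2-β}` for `β < 2`. Since
`G(s) = σ_s / (4πs)`, integrating once more against `G(s)` gives `c s^{2-β}`.
-/

open MeasureTheory Real
open scoped ENNReal NNReal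

/-- The fundamental solution of the wave equation in `ℝ³` at time `t`:
the finite measure `G(t) = (4πt)⁻¹ σ_t`, where `σ_t` is the uniform surface measure
(the 2-dimensional Hausdorff measure) on the sphere of radius `t` centered at the origin. -/
noncomputable def waveG (t : ℝ) : Measure (EuclideanSpace ℝ (Fin 3)) :=
  (ENNReal.ofReal (4 * π * t))⁻¹ •
    (μH[2] : Measure (EuclideanSpace ℝ (Fin 3))).restrict
      (Metric.sphere (0 : EuclideanSpace ℝ (Fin 3)) t)

open Metric Set
open scoped Pointwise

local notation "ℝ²" => EuclideanSpace ℝ (Fin 2)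
local notation "ℝ³" => EuclideanSpace ℝ (Fin 3)

section Potential

variable {X : Type*} [PseudoMetricSpace X]

lemma ENNReal.ofReal_rpow_neg_le_of_le {a d β : ℝ} (hβ : 0 ≤ β) (ha : 0 < a) (had : a ≤ d) :
    ENNReal.ofReal d ^ (-β) ≤ ENNReal.ofReal (a ^ (-β)) := by
  rw [ENNReal.ofReal_rpow_of_pos (ha.trans_le had)]
  exact ENNReal.ofReal_le_ofReal (Real.rpow_le_rpow_of_nonpos ha had (neg_nonpos.2 hβ))

lemma edist_rpow_neg_le_tsum_indicator (z u : X) {β R : ℝ} (hβ : 0 ≤ β) (hR : 0 < R) :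
    edist z u ^ (-β) ≤ ENNReal.ofReal (R ^ (-β)) + ∑' k : ℕ, (closedBall z (R / 2 ^ k)).indicator
      (fun _ ↦ ENNReal.ofReal ((R / 2 ^ (k + 1)) ^ (-β))) u := by
  set f : ℕ → ℝ≥0∞ := fun k ↦
    (closedBall z (R / 2 ^ k)).indicator (fun _ ↦ ENNReal.ofReal ((R / 2 ^ (k + 1)) ^ (-β))) u
  have hf (k : ℕ) (hk : dist u z ≤ R / 2 ^ k) : f k = ENNReal.ofReal ((R / 2 ^ (k + 1)) ^ (-β)) :=
    indicator_of_mem (mem_closedBall.2 hk) _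
  rw [edist_dist, dist_comm]
  rcases (dist_nonneg (x := u) (y := z)).eq_or_lt with hd | hd
  · -- `u` lies in every ball and the coefficients are bounded below, so the series diverges
    have htop : ∑' k, f k = ⊤ := by
      refine eq_top_mono (ENNReal.tsum_le_tsum fun k ↦ ?_) (ENNReal.tsum_const_eq_top_of_ne_zero
        (ENNReal.ofReal_pos.2 (Real.rpow_pos_of_pos (half_pos hR) (-β))).ne')
      rw [hf k (by rw [← hd]; positivity)]
      refine ENNReal.ofReal_le_ofReal (Real.rpow_le_rpow_of_nonpos (by positivity) ?_
        (neg_nonpos.2 hβ))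
      exact div_le_div_of_nonneg_left hR.le two_pos (le_self_pow₀ one_le_two k.succ_ne_zero)
    rw [htop, add_top]
    exact le_top
  rcases le_or_gt R (dist u z) with hRd | hdR
  · exact (ENNReal.ofReal_rpow_neg_le_of_le hβ hR hRd).trans le_self_add
  obtain ⟨k, hk, hk'⟩ := exists_nat_pow_near ((one_le_div hd).2 hdR.le) one_lt_two
  rw [le_div_iff₀ hd, ← le_div_iff₀' (by positivity)] at hk
  rw [div_lt_iff₀ hd, ← div_lt_iff₀' (by positivity)] at hk'
  calc ENNReal.ofReal (dist u z) ^ (-β) ≤ ENNReal.ofReal ((R / 2 ^ (k + 1)) ^ (-β)) :=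
        ENNReal.ofReal_rpow_neg_le_of_le hβ (by positivity) hk'.le
    _ = f k := (hf k hk).symm
    _ ≤ ∑' k, f k := ENNReal.le_tsum k
    _ ≤ _ := le_add_self

lemma rpow_dyadic_radii_mul_eq {α β R : ℝ} (hR : 0 < R) (k : ℕ) :
    (R / 2 ^ (k + 1)) ^ (-β) * (R / 2 ^ k) ^ α = 2 ^ β * R ^ (α - β) * (2 ^ (β - α)) ^ k := by
  have h2k : (0 : ℝ) < 2 ^ k := by positivity
  rw [pow_succ, ← div_div, Real.div_rpow (by positivity) two_pos.le, Real.rpow_neg two_pos.le,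
    div_inv_eq_mul, mul_comm _ (2 ^ β), mul_assoc, ← Real.rpow_add (by positivity),
    neg_add_eq_sub, Real.div_rpow hR.le h2k.le, ← Real.rpow_natCast, ← Real.rpow_mul two_pos.le,
    ← Real.rpow_natCast _ k, ← Real.rpow_mul two_pos.le, div_eq_mul_inv, ← Real.rpow_neg two_pos.le]
  ring_nf

variable [MeasurableSpace X] [OpensMeasurableSpace X]

theorem lintegral_edist_rpow_neg_le (μ : Measure X) (z : X) {α β R : ℝ} {K : ℝ≥0∞}
    (hβ : 0 ≤ β) (hβα : β < α) (hR : 0 < R)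
    (hball : ∀ r, 0 < r → r ≤ R → μ (closedBall z r) ≤ K * ENNReal.ofReal (r ^ α))
    (huniv : μ univ ≤ K * ENNReal.ofReal (R ^ α)) :
    ∫⁻ u, edist z u ^ (-β) ∂μ ≤
      K * ENNReal.ofReal ((1 + 2 ^ β / (1 - 2 ^ (β - α))) * R ^ (α - β)) := by
  have hq : (2 : ℝ) ^ (β - α) < 1 := Real.rpow_lt_one_of_one_lt_of_neg one_lt_two (by linarith)
  calc ∫⁻ u, edist z u ^ (-β) ∂μ
      ≤ ∫⁻ u, ENNReal.ofReal (R ^ (-β)) + ∑' k : ℕ, (closedBall z (R / 2 ^ k)).indicator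
          (fun _ ↦ ENNReal.ofReal ((R / 2 ^ (k + 1)) ^ (-β))) u ∂μ :=
        lintegral_mono fun u ↦ edist_rpow_neg_le_tsum_indicator z u hβ hR
    _ = ENNReal.ofReal (R ^ (-β)) * μ univ + ∑' k : ℕ,
          ENNReal.ofReal ((R / 2 ^ (k + 1)) ^ (-β)) * μ (closedBall z (R / 2 ^ k)) := by
        rw [lintegral_add_left measurable_const, lintegral_tsum fun k ↦
          (measurable_const.indicator measurableSet_closedBall).aemeasurable]
        simp only [lintegral_indicator_const measurableSet_closedBall, lintegral_const]
    _ ≤ ENNReal.ofReal (R ^ (-β)) * (K * ENNReal.ofReal (R ^ α)) + ∑' k : ℕ,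
          ENNReal.ofReal ((R / 2 ^ (k + 1)) ^ (-β)) * (K * ENNReal.ofReal ((R / 2 ^ k) ^ α)) := by
        gcongr with k
        exact hball _ (by positivity) (div_le_self hR.le (one_le_pow₀ one_le_two))
    _ = K * ENNReal.ofReal (R ^ (α - β) + ∑' k : ℕ, 2 ^ β * R ^ (α - β) * (2 ^ (β - α)) ^ k) := by
        have hfirst : ENNReal.ofReal (R ^ (-β)) * (K * ENNReal.ofReal (R ^ α)) =
            K * ENNReal.ofReal (R ^ (α - β)) := by
          rw [mul_left_comm, ← ENNReal.ofReal_mul (by positivity), ← Real.rpow_add hR,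
            neg_add_eq_sub]
        have hterm (k : ℕ) : ENNReal.ofReal ((R / 2 ^ (k + 1)) ^ (-β)) *
            (K * ENNReal.ofReal ((R / 2 ^ k) ^ α)) =
              K * ENNReal.ofReal (2 ^ β * R ^ (α - β) * (2 ^ (β - α)) ^ k) := by
          rw [mul_left_comm, ← ENNReal.ofReal_mul (by positivity), rpow_dyadic_radii_mul_eq hR]
        rw [hfirst, tsum_congr hterm, ENNReal.tsum_mul_left, ← mul_add,
          ← ENNReal.ofReal_tsum_of_nonneg (fun k ↦ by positivity)
            ((summable_geometric_of_lt_one (by positivity) hq).mul_left _),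
          ← ENNReal.ofReal_add (by positivity) (tsum_nonneg fun k ↦ by positivity)]
    _ = K * ENNReal.ofReal ((1 + 2 ^ β / (1 - 2 ^ (β - α))) * R ^ (α - β)) := by
        rw [tsum_mul_left, tsum_geometric_of_lt_one (by positivity) hq, div_eq_mul_inv]
        congr 2; ring

end Potential

theorem lintegral_edist_rpow_neg_sphere_le {E : Type*} [NormedAddCommGroup E]
    [MeasurableSpace E] [BorelSpace E] {d β s : ℝ} {K : ℝ≥0∞} (hβ : 0 ≤ β) (hβd : β < d)
    (hs : 0 < s) (hcap : ∀ (z : E) (r : ℝ), 0 < r → r ≤ s →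
      μH[d] (sphere 0 s ∩ closedBall z r) ≤ K * ENNReal.ofReal (r ^ d)) (z : E) :
    ∫⁻ v, edist z v ^ (-β) ∂(μH[d].restrict (sphere 0 s)) ≤
      K * ENNReal.ofReal ((1 + 2 ^ β / (1 - 2 ^ (β - d))) * s ^ (d - β)) := by
  refine lintegral_edist_rpow_neg_le _ z hβ hβd hs (fun r hr hrs ↦ ?_) ?_
  · rw [Measure.restrict_apply measurableSet_closedBall, inter_comm]
    exact hcap z r hr hrs
  · rw [Measure.restrict_apply_univ, ← inter_eq_self_of_subset_left sphere_subset_closedBall]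
    exact hcap 0 s hs le_rfl

lemma EuclideanSpace.norm_sq_fin_two (y : ℝ²) : ‖y‖ ^ 2 = y 0 ^ 2 + y 1 ^ 2 := by
  simp [EuclideanSpace.norm_sq_eq, Fin.sum_univ_two]

lemma EuclideanSpace.norm_sq_fin_three (u : ℝ³) : ‖u‖ ^ 2 = u 0 ^ 2 + u 1 ^ 2 + u 2 ^ 2 := by
  simp [EuclideanSpace.norm_sq_eq, Fin.sum_univ_three]

instance : (μH[2] : Measure ℝ²).IsAddHaarMeasure := by
  simpa using isAddHaarMeasure_hausdorffMeasure (E := ℝ²)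

noncomputable def hemisphereGraph (y : ℝ²) : ℝ³ := !₂[y 0, y 1, √(1 - ‖y‖ ^ 2)]

lemma lipschitzOnWith_hemisphereGraph :
    LipschitzOnWith 2 hemisphereGraph (closedBall 0 (1 / 2)) := by
  refine LipschitzOnWith.of_dist_le_mul fun x hx x' hx' ↦ ?_
  rw [mem_closedBall_zero_iff] at hx hx'
  set a := √(1 - ‖x‖ ^ 2)
  set b := √(1 - ‖x'‖ ^ 2)
  have ha : a ^ 2 = 1 - ‖x‖ ^ 2 := Real.sq_sqrt (by nlinarith [norm_nonneg x])
  have hb : b ^ 2 = 1 - ‖x'‖ ^ 2 := Real.sq_sqrt (by nlinarith [norm_nonneg x'])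
  have hab : 1 ≤ a + b := by
    linarith [Real.le_sqrt_of_sq_le (x := 1 / 2) (y := 1 - ‖x‖ ^ 2) (by nlinarith [norm_nonneg x]),
      Real.le_sqrt_of_sq_le (x := 1 / 2) (y := 1 - ‖x'‖ ^ 2) (by nlinarith [norm_nonneg x'])]
  have hnorm : (‖x'‖ - ‖x‖) ^ 2 ≤ dist x x' ^ 2 := by
    rw [← sq_abs, dist_eq_norm, norm_sub_rev]
    exact pow_le_pow_left₀ (abs_nonneg _) (abs_norm_sub_norm_le x' x) 2
  -- `(a - b)(a + b) = (‖x'‖ - ‖x‖)(‖x'‖ + ‖x‖)`, where `a + b ≥ 1 ≥ ‖x'‖ + ‖x‖`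
  have hvert : (a - b) ^ 2 ≤ dist x x' ^ 2 := by
    have key : (a - b) * (a + b) = (‖x'‖ - ‖x‖) * (‖x'‖ + ‖x‖) := by linear_combination ha - hb
    calc (a - b) ^ 2 ≤ (a - b) ^ 2 * (a + b) ^ 2 :=
          le_mul_of_one_le_right (sq_nonneg _) (one_le_pow₀ hab)
      _ = (‖x'‖ - ‖x‖) ^ 2 * (‖x'‖ + ‖x‖) ^ 2 := by rw [← mul_pow, key, mul_pow]
      _ ≤ dist x x' ^ 2 * 1 := by
        gcongr
        nlinarith [norm_nonneg x, norm_nonneg x']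
      _ = dist x x' ^ 2 := mul_one _
  have hd : dist x x' ^ 2 = (x 0 - x' 0) ^ 2 + (x 1 - x' 1) ^ 2 := by
    simp [EuclideanSpace.dist_sq_eq, Fin.sum_univ_two, Real.dist_eq, sq_abs]
  have hD : dist (hemisphereGraph x) (hemisphereGraph x') ^ 2 =
      (x 0 - x' 0) ^ 2 + (x 1 - x' 1) ^ 2 + (a - b) ^ 2 := by
    simp [hemisphereGraph, EuclideanSpace.dist_sq_eq, Fin.sum_univ_three, Real.dist_eq, sq_abs,
      a, b]
  rw [NNReal.coe_ofNat, ← sq_le_sq₀ dist_nonneg (by positivity), hD, mul_pow]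
  nlinarith [sq_nonneg (dist x x')]

lemma sphere_inter_closedBall_northPole_subset {t : ℝ} (ht : t ≤ 1 / 2) :
    sphere (0 : ℝ³) 1 ∩ closedBall !₂[0, 0, 1] t ⊆ hemisphereGraph '' closedBall 0 t := by
  rintro u ⟨hu, hut⟩
  rw [mem_sphere_zero_iff_norm] at hu
  rw [mem_closedBall_iff_norm] at hut
  have h1 : u 0 ^ 2 + u 1 ^ 2 + u 2 ^ 2 = 1 := by
    rw [← EuclideanSpace.norm_sq_fin_three, hu, one_pow]
  have h2 : u 0 ^ 2 + u 1 ^ 2 + (u 2 - 1) ^ 2 ≤ t ^ 2 := by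
    have := pow_le_pow_left₀ (norm_nonneg _) hut 2
    simpa [EuclideanSpace.norm_sq_fin_three] using this
  have ht0 : 0 ≤ t := (norm_nonneg _).trans hut
  have hu2 : 0 ≤ u 2 := by nlinarith
  refine ⟨!₂[u 0, u 1], ?_, ?_⟩
  · rw [mem_closedBall_zero_iff, ← sq_le_sq₀ (norm_nonneg _) ht0,
      EuclideanSpace.norm_sq_fin_two]
    simp only [Matrix.cons_val_zero, Matrix.cons_val_one]
    nlinarith
  · have : √(1 - (u 0 ^ 2 + u 1 ^ 2)) = u 2 := by
      rw [show 1 - (u 0 ^ 2 + u 1 ^ 2) = u 2 ^ 2 by linarith, Real.sqrt_sq hu2]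
    ext i
    fin_cases i <;> simp [hemisphereGraph, EuclideanSpace.norm_sq_fin_two, this]

lemma hausdorffMeasure_sphere_inter_closedBall_northPole_le {t : ℝ} (ht0 : 0 ≤ t)
    (ht : t ≤ 1 / 2) : μH[2] (sphere (0 : ℝ³) 1 ∩ closedBall !₂[0, 0, 1] t) ≤
      4 * μH[2] (closedBall (0 : ℝ²) 1) * ENNReal.ofReal (t ^ 2) := by
  calc μH[2] (sphere (0 : ℝ³) 1 ∩ closedBall !₂[0, 0, 1] t)
      ≤ μH[2] (hemisphereGraph '' closedBall 0 t) :=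
        measure_mono (sphere_inter_closedBall_northPole_subset ht)
    _ ≤ (2 : ℝ≥0) ^ (2 : ℝ) * μH[2] (closedBall (0 : ℝ²) t) :=
        (lipschitzOnWith_hemisphereGraph.mono
          (closedBall_subset_closedBall ht)).hausdorffMeasure_image_le zero_le_two
    _ = 4 * μH[2] (closedBall (0 : ℝ²) 1) * ENNReal.ofReal (t ^ 2) := by
        rw [Measure.addHaar_closedBall' _ _ ht0, finrank_euclideanSpace_fin]
        norm_num
        ring

lemma hausdorffMeasure_sphere_inter_closedBall_congr {E : Type*} [NormedAddCommGroup E]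
    [InnerProductSpace ℝ E] [MeasurableSpace E] [BorelSpace E] (d : ℝ) {p q : E} (h : ‖p‖ = ‖q‖)
    (s t : ℝ) : μH[d] (sphere 0 s ∩ closedBall p t) = μH[d] (sphere 0 s ∩ closedBall q t) := by
  set R := (ℝ ∙ (p - q))ᗮ.reflection
  have hR : R '' (sphere 0 s ∩ closedBall p t) = sphere 0 s ∩ closedBall q t := by
    rw [image_inter R.injective, R.image_sphere, R.image_closedBall, map_zero,
      Submodule.reflection_sub h]
  rw [← hR, R.isometry.hausdorffMeasure_image (Or.inr R.surjective)]

lemma hausdorffMeasure_unitSphere_inter_closedBall_le (z : ℝ³) {r : ℝ} (hr0 : 0 ≤ r)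
    (hr : r ≤ 1 / 4) : μH[2] (sphere (0 : ℝ³) 1 ∩ closedBall z r) ≤
      16 * μH[2] (closedBall (0 : ℝ²) 1) * ENNReal.ofReal (r ^ 2) := by
  obtain ⟨p, hp, hmin⟩ := (isCompact_sphere (0 : ℝ³) 1).exists_isMinOn
    (NormedSpace.sphere_nonempty.2 zero_le_one) (f := dist z) (by fun_prop)
  -- a point `p` of the sphere nearest to `z` is within `2r` of every point of the cap around `z`
  have hsub : sphere 0 1 ∩ closedBall z r ⊆ sphere 0 1 ∩ closedBall p (2 * r) :=
    fun u ⟨hu, huz⟩ ↦ ⟨hu, by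
      rw [mem_closedBall] at huz ⊢
      linarith [dist_triangle u z p, dist_comm u z, isMinOn_iff.1 hmin u hu]⟩
  have hpe : ‖p‖ = ‖(!₂[0, 0, 1] : ℝ³)‖ := by
    rw [mem_sphere_zero_iff_norm.1 hp, ← sq_eq_sq₀ zero_le_one (norm_nonneg _),
      EuclideanSpace.norm_sq_fin_three]
    simp
  calc μH[2] (sphere (0 : ℝ³) 1 ∩ closedBall z r)
      ≤ μH[2] (sphere (0 : ℝ³) 1 ∩ closedBall p (2 * r)) := measure_mono hsub
    _ = μH[2] (sphere (0 : ℝ³) 1 ∩ closedBall !₂[0, 0, 1] (2 * r)) :=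
        hausdorffMeasure_sphere_inter_closedBall_congr 2 hpe 1 _
    _ ≤ 4 * μH[2] (closedBall (0 : ℝ²) 1) * ENNReal.ofReal ((2 * r) ^ 2) :=
        hausdorffMeasure_sphere_inter_closedBall_northPole_le (by positivity) (by linarith)
    _ = 16 * μH[2] (closedBall (0 : ℝ²) 1) * ENNReal.ofReal (r ^ 2) := by
        rw [mul_pow, ENNReal.ofReal_mul (by norm_num)]
        norm_num
        ring

lemma hausdorffMeasure_unitSphere_lt_top : μH[2] (sphere (0 : ℝ³) 1) < ⊤ := by
  obtain ⟨t, -, ht, hcover⟩ :=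
    finite_cover_balls_of_compact (isCompact_sphere (0 : ℝ³) 1) (by norm_num : (0 : ℝ) < 1 / 4)
  have hsub : sphere (0 : ℝ³) 1 ⊆ ⋃ x ∈ t, sphere 0 1 ∩ closedBall x (1 / 4) := fun u hu ↦ by
    obtain ⟨x, hx, hux⟩ := mem_iUnion₂.1 (hcover hu)
    exact mem_iUnion₂.2 ⟨x, hx, hu, ball_subset_closedBall hux⟩
  refine (measure_mono hsub).trans_lt (measure_biUnion_lt_top ht fun x _ ↦ ?_)
  refine (hausdorffMeasure_unitSphere_inter_closedBall_le x (by norm_num) le_rfl).trans_lt ?_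
  have : μH[2] (closedBall (0 : ℝ²) 1) < ⊤ := measure_closedBall_lt_top
  finiteness

lemma hausdorffMeasure_sphere_inter_closedBall_eq {E : Type*} [NormedAddCommGroup E]
    [NormedSpace ℝ E] [Nontrivial E] [MeasurableSpace E] [BorelSpace E] {d s : ℝ} (hd : 0 ≤ d)
    (hs : 0 < s) (z : E) {r : ℝ} (hr : 0 ≤ r) :
    μH[d] (sphere (0 : E) s ∩ closedBall z r) =
      ENNReal.ofReal (s ^ d) * μH[d] (sphere 0 1 ∩ closedBall (s⁻¹ • z) (s⁻¹ * r)) := by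
  have hset : sphere (0 : E) s ∩ closedBall z r =
      s • (sphere 0 1 ∩ closedBall (s⁻¹ • z) (s⁻¹ * r)) := by
    rw [smul_set_inter₀ hs.ne', _root_.smul_sphere _ _ zero_le_one,
      _root_.smul_closedBall _ _ (by positivity), smul_zero, smul_inv_smul₀ hs.ne',
      Real.norm_of_nonneg hs.le, mul_one, mul_inv_cancel_left₀ hs.ne']
  rw [hset, Measure.hausdorffMeasure_smul₀ hd hs.ne', ENNReal.smul_def, smul_eq_mul,
    ← ENNReal.ofReal_coe_nnreal, NNReal.coe_rpow, coe_nnnorm, Real.norm_of_nonneg hs.le]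

theorem exists_hausdorffMeasure_sphere_inter_closedBall_le :
    ∃ K : ℝ≥0∞, K ≠ ⊤ ∧ ∀ s : ℝ, 0 < s → ∀ (z : ℝ³) (r : ℝ), 0 ≤ r →
      μH[2] (sphere (0 : ℝ³) s ∩ closedBall z r) ≤ K * ENNReal.ofReal (r ^ 2) := by
  set A := μH[2] (closedBall (0 : ℝ²) 1)
  set M := μH[2] (sphere (0 : ℝ³) 1)
  have hunit : ∀ (z : ℝ³) (r : ℝ), 0 ≤ r →
      μH[2] (sphere (0 : ℝ³) 1 ∩ closedBall z r) ≤ 16 * (A + M) * ENNReal.ofReal (r ^ 2) := by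
    intro z r hr0
    rcases le_or_gt r (1 / 4) with hr | hr
    · refine (hausdorffMeasure_unitSphere_inter_closedBall_le z hr0 hr).trans ?_
      gcongr
      exact le_self_add
    · calc μH[2] (sphere (0 : ℝ³) 1 ∩ closedBall z r) ≤ M := measure_mono inter_subset_left
        _ ≤ (A + M) * ENNReal.ofReal (16 * r ^ 2) := by
            refine le_mul_of_le_of_one_le le_add_self ?_
            rw [ENNReal.one_le_ofReal]
            nlinarith
        _ = 16 * (A + M) * ENNReal.ofReal (r ^ 2) := by
            rw [ENNReal.ofReal_mul (by norm_num)]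
            norm_num
            ring
  refine ⟨16 * (A + M), ?_, fun s hs z r hr ↦ ?_⟩
  · have : μH[2] (closedBall (0 : ℝ²) 1) < ⊤ := measure_closedBall_lt_top
    have := hausdorffMeasure_unitSphere_lt_top
    finiteness
  rw [hausdorffMeasure_sphere_inter_closedBall_eq zero_le_two hs z hr]
  calc ENNReal.ofReal (s ^ (2 : ℝ)) * μH[2] (sphere 0 1 ∩ closedBall (s⁻¹ • z) (s⁻¹ * r))
      ≤ ENNReal.ofReal (s ^ (2 : ℝ)) * (16 * (A + M) * ENNReal.ofReal ((s⁻¹ * r) ^ 2)) := by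
        gcongr
        exact hunit _ _ (by positivity)
    _ = 16 * (A + M) * ENNReal.ofReal (r ^ 2) := by
        rw [mul_left_comm, ← ENNReal.ofReal_mul (by positivity), Real.rpow_two, ← mul_pow,
          mul_inv_cancel_left₀ hs.ne']

lemma lintegral_waveG_rpow_neg_le {β s : ℝ} {K : ℝ≥0∞} (hβ0 : 0 ≤ β) (hβ2 : β < 2) (hs : 0 < s)
    (hcap : ∀ (z : ℝ³) (r : ℝ), 0 < r → r ≤ s →
      μH[2] (sphere (0 : ℝ³) s ∩ closedBall z r) ≤ K * ENNReal.ofReal (r ^ (2 : ℝ))) (w u : ℝ³) :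
    ∫⁻ v, (‖w + v - u‖₊ : ℝ≥0∞) ^ (-β) ∂waveG s ≤ (ENNReal.ofReal (4 * π * s))⁻¹ *
      (K * ENNReal.ofReal ((1 + 2 ^ β / (1 - 2 ^ (β - 2))) * s ^ ((2 : ℝ) - β))) := by
  have hdist (v : ℝ³) : (‖w + v - u‖₊ : ℝ≥0∞) = edist (u - w) v := by
    rw [edist_eq_enorm_sub, ← enorm_neg, enorm_eq_nnnorm]
    congr 2
    abel
  simp_rw [hdist, waveG, lintegral_smul_measure, smul_eq_mul]
  gcongr
  exact lintegral_edist_rpow_neg_sphere_le hβ0 hβ2 hs hcap _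

theorem exists_lintegral_lintegral_waveG_le {β : ℝ} (hβ0 : 0 ≤ β) (hβ2 : β < 2) :
    ∃ c : ℝ, 0 ≤ c ∧ ∀ s : ℝ, 0 < s → ∀ w : ℝ³,
      ∫⁻ u, ∫⁻ v, (‖w + v - u‖₊ : ℝ≥0∞) ^ (-β) ∂waveG s ∂waveG s ≤
        ENNReal.ofReal (c * s ^ ((2 : ℝ) - β)) := by
  obtain ⟨K, hK, hcap⟩ := exists_hausdorffMeasure_sphere_inter_closedBall_le
  simp_rw [← Real.rpow_two] at hcap
  set C : ℝ := 1 + 2 ^ β / (1 - 2 ^ (β - 2))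
  have hC : 0 ≤ C := by
    have : (2 : ℝ) ^ (β - 2) < 1 := Real.rpow_lt_one_of_one_lt_of_neg one_lt_two (by linarith)
    have : 0 < 1 - (2 : ℝ) ^ (β - 2) := by linarith
    positivity
  refine ⟨(K * K * ENNReal.ofReal (C / (16 * π ^ 2))).toReal, ENNReal.toReal_nonneg,
    fun s hs w ↦ ?_⟩
  set κ := (ENNReal.ofReal (4 * π * s))⁻¹
  set P := K * ENNReal.ofReal (C * s ^ ((2 : ℝ) - β))
  have hmass : waveG s univ ≤ κ * (K * ENNReal.ofReal (s ^ (2 : ℝ))) := by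
    rw [waveG, Measure.smul_apply, smul_eq_mul, Measure.restrict_apply_univ,
      ← inter_eq_self_of_subset_left sphere_subset_closedBall]
    gcongr
    exact hcap s hs 0 s hs.le
  calc ∫⁻ u, ∫⁻ v, (‖w + v - u‖₊ : ℝ≥0∞) ^ (-β) ∂waveG s ∂waveG s
      ≤ ∫⁻ _, κ * P ∂waveG s := lintegral_mono
        (lintegral_waveG_rpow_neg_le hβ0 hβ2 hs (fun z r hr _ ↦ hcap s hs z r hr.le) w)
    _ ≤ κ * P * (κ * (K * ENNReal.ofReal (s ^ (2 : ℝ)))) := by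
        rw [lintegral_const]
        gcongr
    _ = K * K * ENNReal.ofReal ((4 * π * s)⁻¹ * (4 * π * s)⁻¹ * s ^ (2 : ℝ) *
          (C * s ^ ((2 : ℝ) - β))) := by
        rw [show κ = ENNReal.ofReal (4 * π * s)⁻¹ from
            (ENNReal.ofReal_inv_of_pos (by positivity)).symm, ENNReal.ofReal_mul (by positivity),
          ENNReal.ofReal_mul (by positivity), ENNReal.ofReal_mul (by positivity)]
        ring
    _ = ENNReal.ofReal ((K * K * ENNReal.ofReal (C / (16 * π ^ 2))).toReal *
          s ^ ((2 : ℝ) - β)) := by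
        rw [ENNReal.ofReal_mul ENNReal.toReal_nonneg, ENNReal.ofReal_toReal (by finiteness),
          mul_assoc (K * K), ← ENNReal.ofReal_mul (by positivity), Real.rpow_two]
        congr 2
        field_simp
        ring

/-- For every `β ∈ (0,2)` there is a finite constant `c` such that for all
`s > 0` and `w ∈ ℝ³`, `∫∫ |w + v − u|^{−β} G(s,du) G(s,dv) ≤ c · s^{2−β}`.  In particular,
for every `T > 0` the supremum of this quantity over `s ∈ (0,T]` and `w ∈ ℝ³` is finite. -/
theorem stmt1 (β : ℝ) (hβ : β ∈ Set.Ioo (0:ℝ) 2) :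
    ∃ c : ℝ,
      (∀ s : ℝ, 0 < s → ∀ w : EuclideanSpace ℝ (Fin 3),
        (∫⁻ u, ∫⁻ v, (‖w + v - u‖₊ : ℝ≥0∞) ^ (-β) ∂(waveG s) ∂(waveG s))
          ≤ ENNReal.ofReal (c * s ^ ((2:ℝ) - β))) ∧
      ∀ T : ℝ, 0 < T →
        (⨆ (s : ℝ) (_ : s ∈ Set.Ioc (0:ℝ) T) (w : EuclideanSpace ℝ (Fin 3)),
          ∫⁻ u, ∫⁻ v, (‖w + v - u‖₊ : ℝ≥0∞) ^ (-β) ∂(waveG s) ∂(waveG s)) < ⊤ := by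
  obtain ⟨c, hc, hbound⟩ := exists_lintegral_lintegral_waveG_le hβ.1.le hβ.2
  refine ⟨c, hbound, fun T _ ↦ lt_of_le_of_lt ?_ (ENNReal.ofReal_lt_top (r := c * T ^ (2 - β)))⟩
  refine iSup_le fun s ↦ iSup_le fun hs ↦ iSup_le fun w ↦ (hbound s hs.1 w).trans ?_
  gcongr
  · exact hs.1.le
  · linarith [hβ.2]
  · exact hs.2
end

section
/- Let β ∈ (0,2) and T > 0. There exists a finite constant C such that for all 0 ≤ s < t ≤ t̄ ≤ T, setting λ := (t̄ − s)/(t − s) (so λ ≥ 1), one has ∫_{ℝ³}∫_{ℝ³} λ · |λ v − u|^{−β} G(t−s,du) G(t−s,dv) ≤ C. -/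
open MeasureTheory Real
open scoped ENNReal NNReal

/-!
`G(r)` gives a ball of radius `ρ` mass at most `50 ρ² / r`: the sphere is covered by six pieces
`{±uᵢ ≥ r/2}`, and on each of them the projection forgetting the `i`-th coordinate has a
`5`-Lipschitz inverse, so the area of a cap is controlled by that of a planar square.
Since `{v | |λ v - u| ≤ ρ}` is the ball of radius `ρ / λ` about `u / λ`, while `|λ v - u| ≤ 2λr`
on the support, a dyadic decomposition of the values of `|λ v - u|` (summable because `β < 2`)
bounds the inner integral by a multiple of `λ^(-β) r^(1-β)`. Integrating against the total mass
`≤ 50 r` gives `λ · λ^(-β) r^(2-β) = (λ r)^(2-β) / λ ≤ T^(2-β)`.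
-/

open Set Metric

local notation "E3" => EuclideanSpace ℝ (Fin 3)

section Dyadic

variable {X : Type*}

/- On the shell `R / 2 ^ (k + 1) < g x ≤ R / 2 ^ k` the `k`-th term dominates; where `g x ≤ 0`
every term is at least `R ^ (-β)`, so the series diverges. -/
lemma rpow_neg_le_tsum_indicator {g : X → ℝ} {β R : ℝ} (hβ : 0 ≤ β) (hR : 0 < R) {x : X}
    (hx : g x ≤ R) :
    ENNReal.ofReal (g x) ^ (-β) ≤ ∑' k : ℕ,
      {y | g y ≤ R / 2 ^ k}.indicator (fun _ => ENNReal.ofReal ((R / 2 ^ (k + 1)) ^ (-β))) x := by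
  rcases le_or_gt (g x) 0 with h0 | hpos
  · have hmem : ∀ k : ℕ, x ∈ {y | g y ≤ R / 2 ^ k} := fun k => h0.trans (by positivity)
    have hterm : ∀ k : ℕ, ENNReal.ofReal (R ^ (-β)) ≤ ENNReal.ofReal ((R / 2 ^ (k + 1)) ^ (-β)) :=
      fun k => ENNReal.ofReal_le_ofReal <| Real.rpow_le_rpow_of_nonpos (by positivity)
        (div_le_self hR.le (one_le_pow₀ one_le_two)) (by linarith)
    simp only [indicator_of_mem (hmem _)]
    have htop : ∑' k : ℕ, ENNReal.ofReal ((R / 2 ^ (k + 1)) ^ (-β)) = ∞ :=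
      top_le_iff.1 <| (ENNReal.tsum_const_eq_top_of_ne_zero (by positivity)).symm.le.trans
        (ENNReal.tsum_le_tsum hterm)
    rw [htop]
    exact le_top
  · obtain ⟨k, hk1, hk2⟩ := exists_nat_pow_near ((one_le_div hpos).2 hx) one_lt_two
    refine le_trans ?_ (ENNReal.le_tsum k)
    have hmem : x ∈ {y | g y ≤ R / 2 ^ k} := by
      rw [le_div_iff₀ hpos] at hk1
      exact (le_div_iff₀ (by positivity : (0:ℝ) < 2 ^ k)).2 (by linarith)
    rw [indicator_of_mem hmem, ENNReal.ofReal_rpow_of_pos hpos]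
    refine ENNReal.ofReal_le_ofReal (Real.rpow_le_rpow_of_nonpos (by positivity) ?_ (by linarith))
    rw [div_lt_iff₀ hpos] at hk2
    exact ((div_lt_iff₀ (by positivity : (0:ℝ) < 2 ^ (k + 1))).2 (by linarith)).le

lemma rpow_neg_div_two_pow_succ_mul_rpow {α β A R : ℝ} (hR : 0 < R) (k : ℕ) :
    (R / 2 ^ (k + 1)) ^ (-β) * (A * (R / 2 ^ k) ^ α)
      = 2 ^ β * A * R ^ (α - β) * (2 ^ (β - α)) ^ k := by
  have hρ : 0 < R / 2 ^ k := by positivity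
  have h1 : (R / 2 ^ (k + 1)) ^ (-β) = 2 ^ β * (R / 2 ^ k) ^ (-β) := by
    rw [pow_succ, ← div_div, Real.div_rpow hρ.le (by norm_num),
      Real.rpow_neg (by norm_num : (0:ℝ) ≤ 2)]
    field_simp
  have h2 : ∀ γ : ℝ, (R / 2 ^ k) ^ γ = R ^ γ * (2 ^ (-γ)) ^ k := fun γ => by
    rw [Real.div_rpow hR.le (by positivity), ← Real.rpow_pow_comm (by norm_num),
      Real.rpow_neg (by norm_num), inv_pow, div_eq_mul_inv]
  have h3 : (R / 2 ^ k) ^ (-β) * (R / 2 ^ k) ^ α = (R / 2 ^ k) ^ (α - β) := by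
    rw [← Real.rpow_add hρ]; ring_nf
  calc (R / 2 ^ (k + 1)) ^ (-β) * (A * (R / 2 ^ k) ^ α)
      = 2 ^ β * A * ((R / 2 ^ k) ^ (-β) * (R / 2 ^ k) ^ α) := by rw [h1]; ring
    _ = _ := by rw [h3, h2, neg_sub]; ring

theorem lintegral_rpow_neg_le_of_measure_sublevel_le [MeasurableSpace X] (μ : Measure X)
    {g : X → ℝ} (hg : Measurable g) {α β A R : ℝ} (hβ : 0 ≤ β) (hβα : β < α) (hA : 0 ≤ A)
    (hR : 0 < R) (hgR : ∀ᵐ x ∂μ, g x ≤ R)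
    (hμ : ∀ ρ, 0 < ρ → μ {x | g x ≤ ρ} ≤ ENNReal.ofReal (A * ρ ^ α)) :
    ∫⁻ x, ENNReal.ofReal (g x) ^ (-β) ∂μ
      ≤ ENNReal.ofReal (2 ^ β * A * R ^ (α - β) / (1 - 2 ^ (β - α))) := by
  have hq0 : (0 : ℝ) ≤ 2 ^ (β - α) := by positivity
  have hq1 : (2 : ℝ) ^ (β - α) < 1 := Real.rpow_lt_one_of_one_lt_of_neg one_lt_two (by linarith)
  have hsub : ∀ k : ℕ, MeasurableSet {y | g y ≤ R / 2 ^ k} :=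
    fun k => measurableSet_le hg measurable_const
  calc ∫⁻ x, ENNReal.ofReal (g x) ^ (-β) ∂μ
      ≤ ∫⁻ x, ∑' k : ℕ, {y | g y ≤ R / 2 ^ k}.indicator
          (fun _ => ENNReal.ofReal ((R / 2 ^ (k + 1)) ^ (-β))) x ∂μ :=
        lintegral_mono_ae <| hgR.mono fun x hx => rpow_neg_le_tsum_indicator hβ hR hx
    _ = ∑' k : ℕ, ENNReal.ofReal ((R / 2 ^ (k + 1)) ^ (-β)) * μ {y | g y ≤ R / 2 ^ k} := by
        rw [lintegral_tsum fun k => (measurable_const.indicator (hsub k)).aemeasurable]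
        simp_rw [lintegral_indicator_const (hsub _)]
    _ ≤ ∑' k : ℕ, ENNReal.ofReal (2 ^ β * A * R ^ (α - β) * (2 ^ (β - α)) ^ k) := by
        refine ENNReal.tsum_le_tsum fun k => ?_
        rw [← rpow_neg_div_two_pow_succ_mul_rpow hR, ENNReal.ofReal_mul (by positivity)]
        gcongr; exact hμ _ (by positivity)
    _ = ENNReal.ofReal (2 ^ β * A * R ^ (α - β) / (1 - 2 ^ (β - α))) := by
        rw [← ENNReal.ofReal_tsum_of_nonneg (fun k => by positivity)
          ((summable_geometric_of_lt_one hq0 hq1).mul_left _), tsum_mul_left,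
          tsum_geometric_of_lt_one hq0 hq1, div_eq_mul_inv]

end Dyadic

theorem hausdorffMeasure_le_mul_hausdorffMeasure_image {X Y : Type*} [EMetricSpace X]
    [MeasurableSpace X] [BorelSpace X] [EMetricSpace Y] [MeasurableSpace Y] [BorelSpace Y]
    {f : X → Y} {K : ℝ≥0} {s : Set X} {d : ℝ} (hd : 0 ≤ d)
    (hf : ∀ x ∈ s, ∀ y ∈ s, edist x y ≤ K * edist (f x) (f y)) :
    μH[d] s ≤ (K : ℝ≥0∞) ^ d * μH[d] (f '' s) := by
  have hanti : AntilipschitzWith K (s.domRestrict f) := fun x y => hf x x.2 y y.2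
  have himage : s.domRestrict f '' univ = f '' s := by
    rw [image_univ, range_domRestrict]
  calc μH[d] s = μH[d] (univ : Set s) := by
        rw [← (isometry_subtype_coe (s := s)).hausdorffMeasure_image (Or.inl hd), image_univ,
          Subtype.range_coe]
    _ ≤ _ := by rw [← himage]; exact hanti.le_hausdorffMeasure_image hd _

def spherePiece (r : ℝ) (i : Fin 3) (b : Bool) : Set E3 :=
  {u | ‖u‖ = r ∧ r ≤ 2 * (if b then u i else -u i)}

def planeProj (i : Fin 3) (u : E3) : ℝ × ℝ := (u (i.succAbove 0), u (i.succAbove 1))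

lemma norm_sq_eq_sq_add_planeProj (i : Fin 3) (u : E3) :
    ‖u‖ ^ 2 = u i ^ 2 + ((planeProj i u).1 ^ 2 + (planeProj i u).2 ^ 2) := by
  rw [EuclideanSpace.real_norm_sq_eq, Fin.sum_univ_succAbove _ i, Fin.sum_univ_two]
  rfl

lemma sphere_subset_iUnion_spherePiece (r : ℝ) :
    sphere (0 : E3) r ⊆ ⋃ p : Fin 3 × Bool, spherePiece r p.1 p.2 := by
  intro u hu
  rw [mem_sphere_zero_iff_norm] at hu
  have hsq : ∑ j, u j ^ 2 = r ^ 2 := by rw [← EuclideanSpace.real_norm_sq_eq, hu]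
  obtain ⟨i, hi⟩ : ∃ i, r ^ 2 ≤ 4 * u i ^ 2 := by
    by_contra! h
    have := Finset.sum_lt_sum_of_nonempty Finset.univ_nonempty fun j _ => h j
    simp only [Finset.sum_const, Finset.card_univ, Fintype.card_fin, nsmul_eq_mul,
      ← Finset.mul_sum, hsq, Nat.cast_ofNat] at this
    nlinarith
  have hr : 0 ≤ r := hu ▸ norm_nonneg u
  have habs : r ≤ 2 * |u i| := by nlinarith [abs_nonneg (u i), sq_abs (u i)]
  refine mem_iUnion.2 ⟨(i, decide (0 ≤ u i)), hu, ?_⟩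
  by_cases h : 0 ≤ u i
  · simpa [h, abs_of_nonneg h] using habs
  · simpa [h, abs_of_neg (not_le.1 h)] using habs

lemma abs_planeProj_le_norm (i : Fin 3) (u : E3) :
    |(planeProj i u).1| ≤ ‖u‖ ∧ |(planeProj i u).2| ≤ ‖u‖ :=
  ⟨PiLp.norm_apply_le u _, PiLp.norm_apply_le u _⟩

lemma abs_sub_apply_le_of_mem_spherePiece {r : ℝ} {i : Fin 3} {b : Bool} {u w : E3}
    (hu : u ∈ spherePiece r i b) (hw : w ∈ spherePiece r i b) :
    |u i - w i| ≤ 4 * dist (planeProj i u) (planeProj i w) := by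
  obtain ⟨hur, hux⟩ := hu
  obtain ⟨hwr, hwy⟩ := hw
  set d := dist (planeProj i u) (planeProj i w)
  set x := if b then u i else -u i
  set y := if b then w i else -w i
  set p := planeProj i u
  set q := planeProj i w
  have hxy : |u i - w i| = |x - y| := by
    cases b
    · simp only [x, y, Bool.false_eq_true, ↓reduceIte, neg_sub_neg, abs_sub_comm]
    · rfl
  have hx : x ^ 2 = u i ^ 2 := by cases b <;> simp [x]
  have hy : y ^ 2 = w i ^ 2 := by cases b <;> simp [y]
  have hnu := hur ▸ norm_sq_eq_sq_add_planeProj i u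
  have hnw := hwr ▸ norm_sq_eq_sq_add_planeProj i w
  obtain ⟨hp1, hp2⟩ := hur ▸ abs_planeProj_le_norm i u
  obtain ⟨hq1, hq2⟩ := hwr ▸ abs_planeProj_le_norm i w
  have hr : 0 ≤ r := hur ▸ norm_nonneg u
  -- `x² - y²` is a difference of squares of planar coordinates, while `x + y ≥ r`.
  have hfactor : (x - y) * (x + y) = (q.1 - p.1) * (q.1 + p.1) + (q.2 - p.2) * (q.2 + p.2) := by
    linear_combination hnw - hnu + hx - hy
  have hbound : |x - y| * r ≤ 4 * d * r := by
    calc |x - y| * r ≤ |(x - y) * (x + y)| := by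
          rw [abs_mul, abs_of_nonneg (by linarith : 0 ≤ x + y)]
          gcongr
          linarith
      _ ≤ |q.1 - p.1| * |q.1 + p.1| + |q.2 - p.2| * |q.2 + p.2| := by
          rw [hfactor, ← abs_mul, ← abs_mul]; exact abs_add_le _ _
      _ ≤ d * (2 * r) + d * (2 * r) := by
          rw [abs_sub_comm q.1, abs_sub_comm q.2]
          gcongr
          · exact (le_max_left _ _ : dist p.1 q.1 ≤ d)
          · exact (abs_add_le _ _).trans (by linarith)
          · exact (le_max_right _ _ : dist p.2 q.2 ≤ d)
          · exact (abs_add_le _ _).trans (by linarith)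
      _ = 4 * d * r := by ring
  rcases hr.eq_or_lt with rfl | hr0
  · simp [norm_eq_zero.1 hur, norm_eq_zero.1 hwr, d]
  · exact hxy ▸ le_of_mul_le_mul_right hbound hr0

lemma dist_le_five_mul_dist_planeProj {r : ℝ} {i : Fin 3} {b : Bool} {u w : E3}
    (hu : u ∈ spherePiece r i b) (hw : w ∈ spherePiece r i b) :
    dist u w ≤ 5 * dist (planeProj i u) (planeProj i w) := by
  set d := dist (planeProj i u) (planeProj i w)
  set p := planeProj i u
  set q := planeProj i w
  have hsplit : ‖u - w‖ ^ 2 = (u i - w i) ^ 2 + ((p.1 - q.1) ^ 2 + (p.2 - q.2) ^ 2) :=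
    norm_sq_eq_sq_add_planeProj i (u - w)
  have h0 : (u i - w i) ^ 2 ≤ (4 * d) ^ 2 := by
    rw [← sq_abs]; gcongr; exact abs_sub_apply_le_of_mem_spherePiece hu hw
  have h1 : (p.1 - q.1) ^ 2 ≤ d ^ 2 := by
    rw [← sq_abs]; gcongr; exact le_max_left _ _
  have h2 : (p.2 - q.2) ^ 2 ≤ d ^ 2 := by
    rw [← sq_abs]; gcongr; exact le_max_right _ _
  rw [dist_eq_norm, ← pow_le_pow_iff_left₀ (norm_nonneg _) (by positivity) two_ne_zero, hsplit]
  nlinarith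

lemma dist_planeProj_le (i : Fin 3) (u w : E3) : dist (planeProj i u) (planeProj i w) ≤ dist u w :=
  max_le (PiLp.dist_apply_le u w _) (PiLp.dist_apply_le u w _)

lemma hausdorffMeasure_closedBall_prod (z : ℝ × ℝ) {ρ : ℝ} (hρ : 0 ≤ ρ) :
    μH[2] (closedBall z ρ) = ENNReal.ofReal (4 * ρ ^ 2) := by
  rw [hausdorffMeasure_prod_real, ← closedBall_prod_same, Measure.volume_eq_prod,
    Measure.prod_prod, Real.volume_closedBall, Real.volume_closedBall,
    ← ENNReal.ofReal_mul (by positivity)]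
  ring_nf

lemma hausdorffMeasure_spherePiece_inter_closedBall_le (r : ℝ) (i : Fin 3) (b : Bool) (x : E3)
    {ρ : ℝ} (hρ : 0 ≤ ρ) :
    μH[2] (spherePiece r i b ∩ closedBall x ρ) ≤ ENNReal.ofReal (100 * ρ ^ 2) := by
  have hanti : ∀ u ∈ spherePiece r i b ∩ closedBall x ρ, ∀ w ∈ spherePiece r i b ∩ closedBall x ρ,
      edist u w ≤ (5 : ℝ≥0) * edist (planeProj i u) (planeProj i w) := by
    intro u hu w hw
    rw [edist_dist, edist_dist, ENNReal.coe_ofNat, ← ENNReal.ofReal_ofNat 5,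
      ← ENNReal.ofReal_mul (by norm_num)]
    exact ENNReal.ofReal_le_ofReal (dist_le_five_mul_dist_planeProj hu.1 hw.1)
  have himage : planeProj i '' (spherePiece r i b ∩ closedBall x ρ) ⊆
      closedBall (planeProj i x) ρ := by
    rintro _ ⟨u, ⟨-, hu⟩, rfl⟩
    exact (dist_planeProj_le i u x).trans hu
  calc μH[2] (spherePiece r i b ∩ closedBall x ρ)
      ≤ ((5 : ℝ≥0) : ℝ≥0∞) ^ (2 : ℝ) *
          μH[2] (planeProj i '' (spherePiece r i b ∩ closedBall x ρ)) :=
        hausdorffMeasure_le_mul_hausdorffMeasure_image zero_le_two hanti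
    _ ≤ ENNReal.ofReal 25 * ENNReal.ofReal (4 * ρ ^ 2) := by
        rw [← hausdorffMeasure_closedBall_prod (planeProj i x) hρ]
        gcongr
        · norm_num
    _ = ENNReal.ofReal (100 * ρ ^ 2) := by
        rw [← ENNReal.ofReal_mul (by norm_num)]; ring_nf

lemma hausdorffMeasure_sphere_inter_closedBall_le (r : ℝ) (x : E3) {ρ : ℝ} (hρ : 0 ≤ ρ) :
    μH[2] (sphere (0 : E3) r ∩ closedBall x ρ) ≤ ENNReal.ofReal (600 * ρ ^ 2) :=
  calc μH[2] (sphere (0 : E3) r ∩ closedBall x ρ)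
      ≤ μH[2] (⋃ p : Fin 3 × Bool, spherePiece r p.1 p.2 ∩ closedBall x ρ) := by
        rw [← iUnion_inter]
        exact measure_mono (inter_subset_inter_left _ (sphere_subset_iUnion_spherePiece r))
    _ ≤ ∑ p : Fin 3 × Bool, μH[2] (spherePiece r p.1 p.2 ∩ closedBall x ρ) :=
        measure_iUnion_fintype_le _ _
    _ ≤ ∑ _p : Fin 3 × Bool, ENNReal.ofReal (100 * ρ ^ 2) :=
        Finset.sum_le_sum fun p _ => hausdorffMeasure_spherePiece_inter_closedBall_le r p.1 p.2 x hρ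
    _ = ENNReal.ofReal (600 * ρ ^ 2) := by
        rw [Finset.sum_const, Finset.card_univ, Fintype.card_prod, Fintype.card_fin,
          Fintype.card_bool, nsmul_eq_mul, ← ENNReal.ofReal_natCast,
          ← ENNReal.ofReal_mul (by positivity)]
        congr 1
        push_cast
        ring

lemma waveG_apply (r : ℝ) {S : Set E3} (hS : MeasurableSet S) :
    waveG r S = (ENNReal.ofReal (4 * π * r))⁻¹ * μH[2] (S ∩ sphere 0 r) := by
  rw [waveG, Measure.smul_apply, Measure.restrict_apply hS, smul_eq_mul]

lemma ae_norm_eq_waveG (r : ℝ) : ∀ᵐ u ∂waveG r, ‖u‖ = r :=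
  (Measure.ae_smul_measure (ae_restrict_mem isClosed_sphere.measurableSet) _).mono
    fun _ hu => mem_sphere_zero_iff_norm.1 hu

lemma waveG_closedBall_le {r : ℝ} (hr : 0 < r) (x : E3) {ρ : ℝ} (hρ : 0 ≤ ρ) :
    waveG r (closedBall x ρ) ≤ ENNReal.ofReal (50 * ρ ^ 2 / r) := by
  rw [waveG_apply r measurableSet_closedBall, inter_comm, ← ENNReal.div_eq_inv_mul]
  calc μH[2] (sphere 0 r ∩ closedBall x ρ) / ENNReal.ofReal (4 * π * r)
      ≤ ENNReal.ofReal (600 * ρ ^ 2) / ENNReal.ofReal (4 * π * r) := by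
        gcongr; exact hausdorffMeasure_sphere_inter_closedBall_le r x hρ
    _ = ENNReal.ofReal (600 * ρ ^ 2 / (4 * π * r)) :=
        (ENNReal.ofReal_div_of_pos (by positivity)).symm
    _ ≤ ENNReal.ofReal (50 * ρ ^ 2 / r) := by
        refine ENNReal.ofReal_le_ofReal ?_
        rw [div_le_div_iff₀ (by positivity) hr]
        nlinarith [Real.pi_gt_three, mul_nonneg (sq_nonneg ρ) hr.le]

lemma waveG_univ_le {r : ℝ} (hr : 0 < r) : waveG r univ ≤ ENNReal.ofReal (50 * r) := by
  have h : waveG r univ = waveG r (closedBall 0 r) := by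
    rw [waveG_apply r MeasurableSet.univ, waveG_apply r measurableSet_closedBall, univ_inter,
      inter_eq_right.2 sphere_subset_closedBall]
  rw [h]
  refine (waveG_closedBall_le hr 0 hr.le).trans_eq ?_
  congr 1
  field_simp

lemma lintegral_waveG_rpow_neg_le_s4 {β r L : ℝ} (hβ : 0 ≤ β) (hβ2 : β < 2) (hr : 0 < r)
    (hL : 1 ≤ L) {u : E3} (hu : ‖u‖ = r) :
    ∫⁻ v, (‖L • v - u‖₊ : ℝ≥0∞) ^ (-β) ∂waveG r
      ≤ ENNReal.ofReal
          (2 ^ β * (50 / (r * L ^ 2)) * (2 * L * r) ^ (2 - β) / (1 - 2 ^ (β - 2))) := by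
  have hL0 : 0 < L := one_pos.trans_le hL
  simp_rw [← enorm_eq_nnnorm, ← ofReal_norm]
  refine lintegral_rpow_neg_le_of_measure_sublevel_le _ (by fun_prop) hβ hβ2 (by positivity)
    (by positivity) ?_ fun ρ hρ => ?_
  · filter_upwards [ae_norm_eq_waveG r] with v hv
    calc ‖L • v - u‖ ≤ ‖L • v‖ + ‖u‖ := norm_sub_le _ _
      _ = L * r + r := by rw [norm_smul, Real.norm_of_nonneg hL0.le, hv, hu]
      _ ≤ 2 * L * r := by nlinarith
  · have hsub : {v : E3 | ‖L • v - u‖ ≤ ρ} ⊆ closedBall (L⁻¹ • u) (ρ / L) := by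
      intro v hv
      rw [mem_closedBall, dist_eq_norm, le_div_iff₀ hL0]
      rw [mem_ofPred_eq, ← smul_inv_smul₀ hL0.ne' u, ← smul_sub, norm_smul,
        Real.norm_of_nonneg hL0.le] at hv
      linarith
    refine (measure_mono hsub).trans ((waveG_closedBall_le hr _ (by positivity)).trans_eq ?_)
    rw [Real.rpow_two]
    congr 1
    field_simp

lemma lintegral_lintegral_waveG_le {β r L : ℝ} (hβ : 0 ≤ β) (hβ2 : β < 2) (hr : 0 < r)
    (hL : 1 ≤ L) :
    ∫⁻ u, ∫⁻ v, ENNReal.ofReal L * (‖L • v - u‖₊ : ℝ≥0∞) ^ (-β) ∂waveG r ∂waveG r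
      ≤ ENNReal.ofReal (10000 * (L * r) ^ (2 - β) / (1 - 2 ^ (β - 2))) := by
  have hL0 : 0 < L := one_pos.trans_le hL
  set I := 2 ^ β * (50 / (r * L ^ 2)) * (2 * L * r) ^ (2 - β) / (1 - 2 ^ (β - 2))
  have hI : L * (I * (50 * r)) ≤ 10000 * (L * r) ^ (2 - β) / (1 - 2 ^ (β - 2)) := by
    have h2 : (2 : ℝ) ^ β * (2 * L * r) ^ (2 - β) = 4 * (L * r) ^ (2 - β) := by
      rw [mul_assoc, Real.mul_rpow (by norm_num) (by positivity), ← mul_assoc,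
        ← Real.rpow_add (by norm_num)]
      norm_num
    calc L * (I * (50 * r)) = 10000 * (L * r) ^ (2 - β) / L / (1 - 2 ^ (β - 2)) := by
          simp only [I]
          rw [mul_right_comm _ (50 / (r * L ^ 2)), h2]
          field_simp
          ring
      _ ≤ 10000 * (L * r) ^ (2 - β) / (1 - 2 ^ (β - 2)) := by
          gcongr
          · exact sub_nonneg.2 (Real.rpow_le_one_of_one_le_of_nonpos one_le_two (by linarith))
          · exact div_le_self (by positivity) hL
  calc ∫⁻ u, ∫⁻ v, ENNReal.ofReal L * (‖L • v - u‖₊ : ℝ≥0∞) ^ (-β) ∂waveG r ∂waveG r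
      = ENNReal.ofReal L * ∫⁻ u, ∫⁻ v, (‖L • v - u‖₊ : ℝ≥0∞) ^ (-β) ∂waveG r ∂waveG r := by
        simp_rw [lintegral_const_mul' _ _ ENNReal.ofReal_ne_top]
    _ ≤ ENNReal.ofReal L * ∫⁻ _, ENNReal.ofReal I ∂waveG r :=
        mul_le_mul_right (lintegral_mono_ae <| (ae_norm_eq_waveG r).mono fun u hu =>
          lintegral_waveG_rpow_neg_le_s4 hβ hβ2 hr hL hu) _
    _ ≤ ENNReal.ofReal L * (ENNReal.ofReal I * ENNReal.ofReal (50 * r)) := by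
        rw [lintegral_const]
        gcongr
        exact waveG_univ_le hr
    _ = ENNReal.ofReal (L * (I * (50 * r))) := by
        rw [ENNReal.ofReal_mul hL0.le, ENNReal.ofReal_mul' (by positivity : (0 : ℝ) ≤ 50 * r)]
    _ ≤ _ := ENNReal.ofReal_le_ofReal hI

theorem stmt4_general (β T : ℝ) (hβ : β ∈ Set.Ioo (0:ℝ) 2) :
    ∃ C : ℝ, ∀ s t tb : ℝ, 0 ≤ s → s < t → t ≤ tb → tb ≤ T →
      (∫⁻ u, ∫⁻ v,
          ENNReal.ofReal ((tb - s) / (t - s)) *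
            (‖((tb - s) / (t - s)) • v - u‖₊ : ℝ≥0∞) ^ (-β)
        ∂(waveG (t - s)) ∂(waveG (t - s)))
        ≤ ENNReal.ofReal C := by
  refine ⟨10000 * T ^ (2 - β) / (1 - 2 ^ (β - 2)), fun s t tb hs hst htb htT => ?_⟩
  have hr : 0 < t - s := sub_pos.2 hst
  have hL : 1 ≤ (tb - s) / (t - s) := (one_le_div hr).2 (by linarith)
  have hLT : (tb - s) / (t - s) * (t - s) ≤ T := by rw [div_mul_cancel₀ _ hr.ne']; linarith
  refine (lintegral_lintegral_waveG_le hβ.1.le hβ.2 hr hL).trans (ENNReal.ofReal_le_ofReal ?_)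
  gcongr
  · exact sub_nonneg.2 (Real.rpow_le_one_of_one_le_of_nonpos one_le_two (by linarith [hβ.2]))
  · linarith [hβ.2]

/-- Let `β ∈ (0,2)` and `T > 0`.  There is a finite constant `C` such that for
all `0 ≤ s < t ≤ tb ≤ T`, with `λ := (tb−s)/(t−s) ≥ 1`,
`∫∫ λ · |λ v − u|^{−β} G(t−s,du) G(t−s,dv) ≤ C`. -/
theorem stmt4 (β T : ℝ) (hβ : β ∈ Set.Ioo (0:ℝ) 2) (hT : 0 < T) :
    ∃ C : ℝ, ∀ s t tb : ℝ, 0 ≤ s → s < t → t ≤ tb → tb ≤ T →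
      (∫⁻ u, ∫⁻ v,
          ENNReal.ofReal ((tb - s) / (t - s)) *
            (‖((tb - s) / (t - s)) • v - u‖₊ : ℝ≥0∞) ^ (-β)
        ∂(waveG (t - s)) ∂(waveG (t - s)))
        ≤ ENNReal.ofReal C :=
  stmt4_general β T hβ
end

section
/- Let α < β be real numbers and let u, b, k : [α,β] → [0,∞) be continuous functions. Let a > 0 and p̄ ≥ 0 with p̄ ≠ 1 be constants, and set q̄ := 1 − p̄. Assume that u(t) ≤ a + ∫_α^t b(s) u(s) ds + ∫_α^t k(s) u(s)^{p̄} ds for all t ∈ [α,β]. Then for every t ∈ [α,β] such that a^{q̄} + q̄ ∫_α^t k(s) exp(−q̄ ∫_α^s b(τ) dτ) ds > 0 (a condition which holds automatically for all t ∈ [α,β] when q̄ > 0), one has u(t) ≤ exp(∫_α^t b(s) ds) · ( a^{q̄} + q̄ ∫_α^t k(s) exp(−q̄ ∫_α^s b(τ) dτ) ds )^{1/q̄}. -/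
/-!
The right-hand side `v` of the hypothesis is a positive majorant of `u` satisfying the Bernoulli
differential inequality `v' ≤ b v + k v ^ p`. Multiplying by `v ^ (-p)` linearises it: with
`q = 1 - p`, `B = ∫ b` and `K = ∫ k e^{-qB}`, the function `v ^ q e^{-qB} / q - K` is antitone.
Comparing its values at `α` and `t` and solving for `v t` gives the bound; the division by `q`
makes the argument independent of the sign of `q`.
-/

open MeasureTheory intervalIntegral Real Set

namespace ContinuousOn

variable {f : ℝ → ℝ} {a b : ℝ}

theorem continuousOn_primitive_Icc (hf : ContinuousOn f (Icc a b)) (hab : a ≤ b) :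
    ContinuousOn (fun x => ∫ s in a..x, f s) (Icc a b) := by
  have hf' : IntegrableOn f (uIcc a b) := by simpa only [uIcc_of_le hab] using hf.integrableOn_Icc
  simpa only [uIcc_of_le hab] using continuousOn_primitive_interval hf'

theorem hasDerivAt_primitive (hf : ContinuousOn f (Icc a b)) {x : ℝ} (hx : x ∈ Ioo a b) :
    HasDerivAt (fun y => ∫ s in a..y, f s) (f x) x :=
  integral_hasDerivAt_right
    ((hf.mono (Icc_subset_Icc_right hx.2.le)).intervalIntegrable_of_Icc hx.1.le)
    ((hf.mono Ioo_subset_Icc_self).stronglyMeasurableAtFilter isOpen_Ioo x hx)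
    (hf.continuousAt (Icc_mem_nhds hx.1 hx.2))

end ContinuousOn

theorem Real.le_rpow_one_div_of_rpow_div_le {x y q : ℝ} (hx : 0 < x) (hy : 0 < y) (hq : q ≠ 0)
    (h : x ^ q / q ≤ y / q) : x ≤ y ^ (1 / q) := by
  rw [one_div]
  rcases hq.lt_or_gt with hq | hq
  · exact (le_rpow_inv_iff_of_neg hx hy hq).2 ((div_le_div_right_of_neg hq).1 h)
  · exact (le_rpow_inv_iff_of_pos hx.le hy.le hq).2 ((div_le_div_iff_of_pos_right hq).1 h)

theorem le_exp_mul_rpow_of_hasDerivAt_le {α t p : ℝ} {v v' b k : ℝ → ℝ} (hp : p ≠ 1)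
    (hαt : α ≤ t) (hv : ContinuousOn v (Icc α t)) (hv_pos : ∀ x ∈ Icc α t, 0 < v x)
    (hv' : ∀ x ∈ Ioo α t, HasDerivAt v (v' x) x)
    (hb : ContinuousOn b (Icc α t)) (hk : ContinuousOn k (Icc α t))
    (hle : ∀ x ∈ Ioo α t, v' x ≤ b x * v x + k x * v x ^ p)
    (hpos : 0 < v α ^ (1 - p)
      + (1 - p) * ∫ s in α..t, k s * exp (-(1 - p) * ∫ τ in α..s, b τ)) :
    v t ≤ exp (∫ s in α..t, b s) *
      (v α ^ (1 - p) + (1 - p) * ∫ s in α..t, k s * exp (-(1 - p) * ∫ τ in α..s, b τ))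
        ^ (1 / (1 - p)) := by
  set q := 1 - p with hq_def
  have hq : q ≠ 0 := sub_ne_zero.2 hp.symm
  set B : ℝ → ℝ := fun x => ∫ τ in α..x, b τ
  set K : ℝ → ℝ := fun x => ∫ s in α..x, k s * exp (-q * B s)
  have hB : ContinuousOn B (Icc α t) := hb.continuousOn_primitive_Icc hαt
  have hkE : ContinuousOn (fun s => k s * exp (-q * B s)) (Icc α t) :=
    hk.mul (continuousOn_const.mul hB).rexp
  set φ : ℝ → ℝ := fun x => v x ^ q * exp (-q * B x) / q - K x
  have hφ : AntitoneOn φ (Icc α t) := by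
    refine antitoneOn_of_hasDerivWithinAt_nonpos (convex_Icc α t)
      (f' := fun x => exp (-q * B x) * (v x ^ (-p) * v' x - (b x * v x ^ q + k x))) ?_ ?_ ?_
    · exact ((((hv.rpow_const fun x hx => Or.inl (hv_pos x hx).ne').mul
        (continuousOn_const.mul hB).rexp).div_const q).sub (hkE.continuousOn_primitive_Icc hαt))
    · rw [interior_Icc]
      intro x hx
      have hvx : v x ≠ 0 := (hv_pos x (Ioo_subset_Icc_self hx)).ne'
      have := ((((hv' x hx).rpow_const (p := q) (Or.inl hvx)).mul
        ((hb.hasDerivAt_primitive hx).const_mul (-q)).exp).div_const q).sub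
        (hkE.hasDerivAt_primitive hx)
      refine (this.congr_deriv ?_).hasDerivWithinAt
      rw [show q - 1 = -p by ring]
      field_simp
      ring
    · rw [interior_Icc]
      intro x hx
      have hvx := hv_pos x (Ioo_subset_Icc_self hx)
      have hvq : v x ^ (-p) * (b x * v x + k x * v x ^ p) = b x * v x ^ q + k x := by
        rw [mul_add, mul_left_comm, ← rpow_add_one hvx.ne', mul_left_comm, ← rpow_add hvx]
        simp [hq_def, neg_add_eq_sub]
      have := mul_le_mul_of_nonneg_left (hle x hx) (rpow_nonneg hvx.le (-p))
      exact mul_nonpos_of_nonneg_of_nonpos (exp_pos _).le (by linarith)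
  have hφt : v t ^ q * exp (-q * B t) / q - K t ≤ v α ^ q / q := by
    simpa [φ, B, K] using hφ ⟨le_rfl, hαt⟩ ⟨hαt, le_rfl⟩ hαt
  have hx : (v t * exp (-B t)) ^ q = v t ^ q * exp (-q * B t) := by
    rw [mul_rpow (hv_pos t ⟨hαt, le_rfl⟩).le (exp_pos _).le, ← exp_mul]
    ring_nf
  have hbound := le_rpow_one_div_of_rpow_div_le (mul_pos (hv_pos t ⟨hαt, le_rfl⟩) (exp_pos _))
    hpos hq (by rw [hx, add_div, mul_div_cancel_left₀ _ hq]; linarith)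
  calc v t = exp (B t) * (v t * exp (-B t)) := by rw [mul_left_comm, ← exp_add]; simp
    _ ≤ _ := mul_le_mul_of_nonneg_left hbound (exp_pos _).le

theorem le_exp_mul_rpow_of_le_add_integral {α t a p : ℝ} {u b k : ℝ → ℝ} (hαt : α ≤ t)
    (hu : ContinuousOn u (Icc α t)) (hb : ContinuousOn b (Icc α t))
    (hk : ContinuousOn k (Icc α t)) (hu0 : ∀ x ∈ Icc α t, 0 ≤ u x)
    (hb0 : ∀ x ∈ Icc α t, 0 ≤ b x) (hk0 : ∀ x ∈ Icc α t, 0 ≤ k x)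
    (ha : 0 < a) (hp0 : 0 ≤ p) (hp1 : p ≠ 1)
    (hineq : ∀ x ∈ Icc α t,
      u x ≤ a + (∫ s in α..x, b s * u s) + ∫ s in α..x, k s * u s ^ p)
    (hpos : 0 < a ^ (1 - p)
      + (1 - p) * ∫ s in α..t, k s * exp (-(1 - p) * ∫ τ in α..s, b τ)) :
    u t ≤ exp (∫ s in α..t, b s) *
      (a ^ (1 - p) + (1 - p) * ∫ s in α..t, k s * exp (-(1 - p) * ∫ τ in α..s, b τ))
        ^ (1 / (1 - p)) := by
  have hbu : ContinuousOn (fun s => b s * u s) (Icc α t) := hb.mul hu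
  have hku : ContinuousOn (fun s => k s * u s ^ p) (Icc α t) :=
    hk.mul (hu.rpow_const fun _ _ => Or.inr hp0)
  set v : ℝ → ℝ := fun x => a + (∫ s in α..x, b s * u s) + ∫ s in α..x, k s * u s ^ p
  have hv_pos (x) (hx : x ∈ Icc α t) : 0 < v x := by
    have hI : Icc α x ⊆ Icc α t := Icc_subset_Icc_right hx.2
    have h₁ : 0 ≤ ∫ s in α..x, b s * u s := integral_nonneg hx.1 fun s hs =>
      mul_nonneg (hb0 s (hI hs)) (hu0 s (hI hs))
    have h₂ : 0 ≤ ∫ s in α..x, k s * u s ^ p := integral_nonneg hx.1 fun s hs =>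
      mul_nonneg (hk0 s (hI hs)) (rpow_nonneg (hu0 s (hI hs)) p)
    linarith
  have hv_le (x) (hx : x ∈ Ioo α t) :
      b x * u x + k x * u x ^ p ≤ b x * v x + k x * v x ^ p := by
    have hx' := Ioo_subset_Icc_self hx
    have hux := hineq x hx'
    have := hu0 x hx'
    gcongr
    exacts [hb0 x hx', hk0 x hx']
  have hbound := le_exp_mul_rpow_of_hasDerivAt_le (v := v) hp1 hαt
    ((continuousOn_const.add (hbu.continuousOn_primitive_Icc hαt)).add
      (hku.continuousOn_primitive_Icc hαt))
    hv_pos (fun x hx => ((hbu.hasDerivAt_primitive hx).const_add a).add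
      (hku.hasDerivAt_primitive hx)) hb hk hv_le
  have hvα : v α = a := by simp [v]
  rw [hvα] at hbound
  exact (hineq t ⟨hαt, le_rfl⟩).trans (hbound hpos)

theorem stmt11_general (α β : ℝ) (u b k : ℝ → ℝ)
    (hu : ContinuousOn u (Set.Icc α β)) (hb : ContinuousOn b (Set.Icc α β))
    (hk : ContinuousOn k (Set.Icc α β))
    (hu0 : ∀ t ∈ Set.Icc α β, 0 ≤ u t) (hb0 : ∀ t ∈ Set.Icc α β, 0 ≤ b t)
    (hk0 : ∀ t ∈ Set.Icc α β, 0 ≤ k t)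
    (a p' : ℝ) (ha : 0 < a) (hp0 : 0 ≤ p') (hp1 : p' ≠ 1)
    (hineq : ∀ t ∈ Set.Icc α β,
      u t ≤ a + (∫ s in α..t, b s * u s) + ∫ s in α..t, k s * u s ^ p') :
    ∀ t ∈ Set.Icc α β,
      0 < a ^ (1 - p')
          + (1 - p') * ∫ s in α..t, k s * Real.exp (-(1 - p') * ∫ τ in α..s, b τ) →
      u t ≤ Real.exp (∫ s in α..t, b s) *
        (a ^ (1 - p')
          + (1 - p') * ∫ s in α..t, k s * Real.exp (-(1 - p') * ∫ τ in α..s, b τ))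
          ^ (1 / (1 - p')) := by
  intro t ht
  have hsub : Icc α t ⊆ Icc α β := Icc_subset_Icc_right ht.2
  exact le_exp_mul_rpow_of_le_add_integral ht.1 (hu.mono hsub) (hb.mono hsub) (hk.mono hsub)
    (fun x hx => hu0 x (hsub hx)) (fun x hx => hb0 x (hsub hx)) (fun x hx => hk0 x (hsub hx))
    ha hp0 hp1 (fun x hx => hineq x (hsub hx))

/-- a Bihari–Gronwall type inequality.  Let `u, b, k : [α,β] → [0,∞)` be
continuous, `a > 0`, `p̄ ≥ 0`, `p̄ ≠ 1`, `q̄ := 1 − p̄`, and suppose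
`u(t) ≤ a + ∫_α^t b u + ∫_α^t k u^p̄` on `[α,β]`.  Then for every `t ∈ [α,β]` at which
`a^q̄ + q̄ ∫_α^t k(s) exp(−q̄ ∫_α^s b) ds > 0` (automatic when `q̄ > 0`), one has
`u(t) ≤ exp(∫_α^t b) · (a^q̄ + q̄ ∫_α^t k(s) exp(−q̄ ∫_α^s b) ds)^{1/q̄}`. -/
theorem stmt11 (α β : ℝ) (hαβ : α < β) (u b k : ℝ → ℝ)
    (hu : ContinuousOn u (Set.Icc α β)) (hb : ContinuousOn b (Set.Icc α β))
    (hk : ContinuousOn k (Set.Icc α β))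
    (hu0 : ∀ t ∈ Set.Icc α β, 0 ≤ u t) (hb0 : ∀ t ∈ Set.Icc α β, 0 ≤ b t)
    (hk0 : ∀ t ∈ Set.Icc α β, 0 ≤ k t)
    (a p' : ℝ) (ha : 0 < a) (hp0 : 0 ≤ p') (hp1 : p' ≠ 1)
    (hineq : ∀ t ∈ Set.Icc α β,
      u t ≤ a + (∫ s in α..t, b s * u s) + ∫ s in α..t, k s * u s ^ p') :
    ∀ t ∈ Set.Icc α β,
      0 < a ^ (1 - p')
          + (1 - p') * ∫ s in α..t, k s * Real.exp (-(1 - p') * ∫ τ in α..s, b τ) →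
      u t ≤ Real.exp (∫ s in α..t, b s) *
        (a ^ (1 - p')
          + (1 - p') * ∫ s in α..t, k s * Real.exp (-(1 - p') * ∫ τ in α..s, b τ))
          ^ (1 / (1 - p')) :=
  stmt11_general α β u b k hu hb hk hu0 hb0 hk0 a p' ha hp0 hp1 hineq
end
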